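/- arXiv:2303.16309 — 2 statements merged into one kernel-verified Lean document; each statement's English description precedes it below -/
import Mathlib

section
/- Let c be an integer with |c| > 2 and let w be a complex root of f(x) = x^4 - c x^2 + 1. Then Q(w) = Q(w + 1/w) if and only if c = a^2 + 2 for some natural number a. -/
/-!
Put `t = w + w⁻¹` and `s = w - w⁻¹`, so that `t ^ 2 = c + 2`, `s ^ 2 = c - 2` and `2 w = t + s`;
hence `ℚ(w) = ℚ(t)` exactly when `s ∈ ℚ(t)`. Writing `s = u + v t` with `u, v ∈ ℚ`, rationality
of `s ^ 2` forces `s ∈ ℚ` or `s ∈ ℚ t`. The first case says that `c - 2` is a square; the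
second would make `(c - 2)(c + 2) = c ^ 2 - 4` a square, which it is not since
`(|c| - 1) ^ 2 < c ^ 2 - 4 < c ^ 2`.
-/

open IntermediateField Polynomial

section

variable {K L : Type*} [Field K] [Field L] [Algebra K L]

theorem IntermediateField.exists_eq_add_mul_of_mem_adjoin_of_sq_eq {t x : L} {d : K}
    (ht : t ^ 2 = algebraMap K L d) (hx : x ∈ K⟮t⟯) :
    ∃ u v : K, x = algebraMap K L u + algebraMap K L v * t := by
  have hmonic : (X ^ 2 - C d).Monic := monic_X_pow_sub_C d two_ne_zero
  have hroot : aeval t (X ^ 2 - C d) = 0 := by simp [ht]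
  rw [← mem_toSubalgebra, adjoin_simple_toSubalgebra_of_isAlgebraic
    ⟨X ^ 2 - C d, hmonic.ne_zero, hroot⟩, Algebra.adjoin_singleton_eq_range_aeval] at hx
  obtain ⟨p, rfl⟩ := hx
  have hdeg : (p %ₘ (X ^ 2 - C d)).natDegree ≤ 1 := by
    have := natDegree_modByMonic_lt p hmonic fun h ↦ by simpa using congrArg natDegree h
    rw [natDegree_X_pow_sub_C] at this
    omega
  refine ⟨(p %ₘ (X ^ 2 - C d)).coeff 0, (p %ₘ (X ^ 2 - C d)).coeff 1, ?_⟩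
  rw [AlgHom.toRingHom_eq_coe, RingHom.coe_coe, ← aeval_modByMonic_eq_self_of_root hroot]
  conv_lhs => rw [eq_X_add_C_of_natDegree_le_one hdeg]
  simp only [map_add, map_mul, aeval_C, aeval_X]
  ring

theorem IntermediateField.exists_eq_or_eq_mul_of_mem_adjoin_of_sq_eq [NeZero (2 : K)]
    {s t : L} {a b : K} (hs : s ^ 2 = algebraMap K L a) (ht : t ^ 2 = algebraMap K L b)
    (hmem : s ∈ K⟮t⟯) : ∃ q : K, s = algebraMap K L q ∨ s = algebraMap K L q * t := by
  obtain ⟨u, v, rfl⟩ := exists_eq_add_mul_of_mem_adjoin_of_sq_eq ht hmem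
  by_cases huv : u * v = 0
  · rcases mul_eq_zero.1 huv with rfl | rfl
    · exact ⟨v, Or.inr (by simp)⟩
    · exact ⟨u, Or.inl (by simp)⟩
  -- the `t`-coordinate of `s ^ 2 = u ^ 2 + v ^ 2 b + 2 u v t` must vanish unless `t ∈ K`
  have h2uv : (2 * u * v : K) ≠ 0 := by rw [mul_assoc]; exact mul_ne_zero two_ne_zero huv
  have ht' : t = algebraMap K L ((a - u ^ 2 - v ^ 2 * b) / (2 * u * v)) := by
    rw [map_div₀, eq_div_iff (by simpa using h2uv)]
    simp only [map_sub, map_mul, map_pow, map_ofNat, ← hs, ← ht]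
    ring
  exact ⟨u + v * ((a - u ^ 2 - v ^ 2 * b) / (2 * u * v)), Or.inl (by rw [ht']; simp)⟩

theorem IntermediateField.adjoin_simple_eq_adjoin_add_inv_iff [NeZero (2 : L)] (w : L) :
    K⟮w⟯ = K⟮w + w⁻¹⟯ ↔ w - w⁻¹ ∈ K⟮w + w⁻¹⟯ := by
  have hw : w ∈ K⟮w⟯ := mem_adjoin_simple_self K w
  have ht : w + w⁻¹ ∈ K⟮w + w⁻¹⟯ := mem_adjoin_simple_self K _
  rw [le_antisymm_iff, and_iff_left (adjoin_simple_le_iff.2 (add_mem hw (inv_mem hw))),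
    adjoin_simple_le_iff]
  refine ⟨fun h ↦ sub_mem h (inv_mem h), fun h ↦ ?_⟩
  have h2w : ((w + w⁻¹) + (w - w⁻¹)) / 2 = w := by
    rw [add_add_sub_cancel, ← two_mul, mul_div_cancel_left₀ _ two_ne_zero]
  simpa only [h2w] using div_mem (add_mem ht h) (ofNat_mem _ 2)

end

theorem Int.not_isSquare_sq_sub_four {c : ℤ} (hc : 2 < |c|) : ¬ IsSquare (c ^ 2 - 4) := by
  rintro ⟨k, hk⟩
  have hlt : |k| < |c| := sq_lt_sq.1 (by nlinarith)
  have hgt : |c| - 1 < |k| := by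
    rw [← abs_of_pos (by omega : 0 < |c| - 1)]
    exact sq_lt_sq.1 (by nlinarith [sq_abs c])
  omega

/-- Let `c` be an integer with `|c| > 2` and `w` a complex root of
`x^4 - c x^2 + 1`. Then `ℚ(w) = ℚ(w + 1/w)` iff `c = a^2 + 2` for some `a : ℕ`. -/
theorem field_eq_iff_trace_condition (c : ℤ) (hc : 2 < |c|) (w : ℂ)
    (hw : w ^ 4 - (c : ℂ) * w ^ 2 + 1 = 0) :
    ℚ⟮w⟯ = ℚ⟮w + w⁻¹⟯ ↔ ∃ a : ℕ, c = (a : ℤ) ^ 2 + 2 := by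
  have hw0 : w ≠ 0 := by rintro rfl; norm_num at hw
  have ht : (w + w⁻¹) ^ 2 = algebraMap ℚ ℂ (c + 2) := by
    rw [map_add, map_intCast, map_ofNat]; field_simp; linear_combination hw
  have hs : (w - w⁻¹) ^ 2 = algebraMap ℚ ℂ (c - 2) := by
    rw [map_sub, map_intCast, map_ofNat]; field_simp; linear_combination hw
  rw [adjoin_simple_eq_adjoin_add_inv_iff]
  constructor
  · intro hmem
    obtain ⟨q, hq | hq⟩ := exists_eq_or_eq_mul_of_mem_adjoin_of_sq_eq hs ht hmem
    · have hq2 : (c - 2 : ℚ) = q * q := by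
        apply (algebraMap ℚ ℂ).injective
        rw [map_mul, ← hs, hq, sq]
      obtain ⟨k, hk⟩ : IsSquare (c - 2) := Rat.isSquare_intCast_iff.1 ⟨q, by exact_mod_cast hq2⟩
      exact ⟨k.natAbs, by rw [sq, Int.natAbs_mul_self']; linarith⟩
    · have hq2 : (c - 2 : ℚ) = q ^ 2 * (c + 2) := by
        apply (algebraMap ℚ ℂ).injective
        rw [map_mul, map_pow, ← hs, ← ht, hq]
        ring
      refine absurd (Rat.isSquare_intCast_iff.1 ⟨q * (c + 2), ?_⟩) (Int.not_isSquare_sq_sub_four hc)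
      push_cast
      linear_combination (c + 2 : ℚ) * hq2
  · rintro ⟨a, rfl⟩
    have ha : w - w⁻¹ = a ∨ w - w⁻¹ = -a :=
      sq_eq_sq_iff_eq_or_eq_neg.1 (by rw [hs]; push_cast; ring)
    rcases ha with ha | ha <;> rw [ha]
    · exact IntermediateField.natCast_mem _ a
    · exact neg_mem (IntermediateField.natCast_mem _ a)
end

section
/- Let c be an integer with |c| > 2 such that c is not of the form a^2 - 2 or a^2 + 2 for any integer a. Then x^4 - c x^2 + 1 is irreducible over Q. -/
/-!
Over `ℤ` (enough by Gauss's lemma) a factorization of the monic quartic `X⁴ - c X² + 1` has a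
monic factor of degree one or two. A linear factor gives an integer root `b`, and then
`b² (c - b²) = 1` forces `c = 2`. A product of two monic quadratics has constant terms `b, e` with
`b e = 1` and middle terms `a, -a`, so comparing the `X²` coefficients gives
`c = a² - b - e = a² ∓ 2`.
-/

open Polynomial

section Quartic

variable {R : Type*} [CommRing R]

noncomputable def quartic (c : R) : R[X] := X ^ 4 - C c * X ^ 2 + 1

theorem monic_quartic [Nontrivial R] (c : R) : (quartic c).Monic := by
  unfold quartic; monicity!

theorem natDegree_quartic [Nontrivial R] (c : R) : (quartic c).natDegree = 4 := by
  unfold quartic; compute_degree!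

theorem map_quartic {S : Type*} [CommRing S] (f : R →+* S) (c : R) :
    (quartic c).map f = quartic (f c) := by
  simp [quartic, Polynomial.map_sub]

theorem coeff_relations_of_mul_eq_quartic {a b d e c : R}
    (h : (X ^ 2 + C a * X + C b) * (X ^ 2 + C d * X + C e) = quartic c) :
    a + d = 0 ∧ b + e + a * d = -c ∧ b * e = 1 := by
  have hexpand : (X ^ 2 + C a * X + C b) * (X ^ 2 + C d * X + C e) =
      X ^ 4 + C (a + d) * X ^ 3 + C (b + e + a * d) * X ^ 2 + C (a * e + b * d) * X
        + C (b * e) := by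
    simp only [map_add, map_mul]; ring
  rw [hexpand, quartic] at h
  have h3 := congrArg (coeff · 3) h
  have h2 := congrArg (coeff · 2) h
  have h0 := congrArg (coeff · 0) h
  simp only [coeff_add, coeff_sub, coeff_C_mul, coeff_X_pow, coeff_X, coeff_C, coeff_one]
    at h3 h2 h0
  norm_num at h3 h2 h0
  exact ⟨h3, h2, h0⟩

end Quartic

theorem eq_two_of_isRoot_quartic {c b : ℤ} (h : (quartic c).IsRoot b) : c = 2 := by
  have hunit : b ^ 2 * (c - b ^ 2) = 1 := by
    simp only [quartic, IsRoot, eval_add, eval_sub, eval_mul, eval_pow, eval_C, eval_X,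
      eval_one] at h
    linear_combination -h
  have hb : b ^ 2 = 1 := by
    rcases Int.eq_one_or_neg_one_of_mul_eq_one hunit with h | h
    · exact h
    · linarith [sq_nonneg b]
  rw [hb] at hunit
  linarith

theorem exists_eq_sq_sub_two_or_eq_sq_add_two_of_mul_eq_quartic {a b d e c : ℤ}
    (h : (X ^ 2 + C a * X + C b) * (X ^ 2 + C d * X + C e) = quartic c) :
    (∃ t : ℤ, c = t ^ 2 - 2) ∨ ∃ t : ℤ, c = t ^ 2 + 2 := by
  obtain ⟨h3, h2, h0⟩ := coeff_relations_of_mul_eq_quartic h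
  rcases Int.eq_one_or_neg_one_of_mul_eq_one' h0 with ⟨rfl, rfl⟩ | ⟨rfl, rfl⟩
  · exact .inl ⟨a, by linear_combination h2 - a * h3⟩
  · exact .inr ⟨a, by linear_combination h2 - a * h3⟩

theorem irreducible_quartic_int {c : ℤ} (h1 : ¬ ∃ a : ℤ, c = a ^ 2 - 2)
    (h2 : ¬ ∃ a : ℤ, c = a ^ 2 + 2) : Irreducible (quartic c) := by
  have hquartic : IsMonicOfDegree (quartic c) (2 + 2) := ⟨natDegree_quartic c, monic_quartic c⟩
  rw [(monic_quartic c).irreducible_iff_natDegree', natDegree_quartic]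
  refine ⟨fun h ↦ by simpa [h] using natDegree_quartic c, fun f g hf hg hfg hdeg ↦ ?_⟩
  obtain hg1 | hg2 : g.natDegree = 1 ∨ g.natDegree = 2 := by
    simp only [Nat.reduceDiv, Finset.mem_Ioc] at hdeg; omega
  · obtain ⟨r, rfl⟩ := isMonicOfDegree_one_iff.mp ⟨hg1, hg⟩
    have hroot : (quartic c).IsRoot (-r) := by simp [← hfg]
    exact h2 ⟨0, eq_two_of_isRoot_quartic hroot⟩
  · have hg : IsMonicOfDegree g 2 := ⟨hg2, hg⟩
    obtain ⟨a, b, rfl⟩ := isMonicOfDegree_two_iff.mp (hg.of_mul_right (hfg ▸ hquartic))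
    obtain ⟨d, e, rfl⟩ := isMonicOfDegree_two_iff.mp hg
    exact (exists_eq_sq_sub_two_or_eq_sq_add_two_of_mul_eq_quartic hfg).elim h1 h2

theorem quartic_irreducible_general (c : ℤ)
    (h1 : ¬ ∃ a : ℤ, c = a ^ 2 - 2) (h2 : ¬ ∃ a : ℤ, c = a ^ 2 + 2) :
    Irreducible (X ^ 4 - C (c : ℚ) * X ^ 2 + 1 : Polynomial ℚ) := by
  have h := (monic_quartic c).irreducible_iff_irreducible_map_fraction_map (K := ℚ) |>.mp
    (irreducible_quartic_int h1 h2)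
  rwa [map_quartic, algebraMap_int_eq, eq_intCast] at h

/-- For `|c| > 2` with `c` not of the form `a^2 - 2` nor `a^2 + 2`,
the polynomial `x^4 - c x^2 + 1` is irreducible over `ℚ`. -/
theorem quartic_irreducible (c : ℤ) (hc : 2 < |c|)
    (h1 : ¬ ∃ a : ℤ, c = a ^ 2 - 2) (h2 : ¬ ∃ a : ℤ, c = a ^ 2 + 2) :
    Irreducible (X ^ 4 - C (c : ℚ) * X ^ 2 + 1 : Polynomial ℚ) :=
  quartic_irreducible_general c h1 h2
end
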